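/- Let G be a graph, F a minimum edge dominating set of G such that there exist two distinct edges e, e' ∈ F and an edge e'' adjacent (or equal) to both e and e' (i.e., e'' ∈ N[e] ∩ N[e']). Then γ'_t(G) ≤ 2·γ'(G) − 1. -/

import Mathlib

/-!
Keep the minimum edge dominating set `F`, add the edge `e''`, and give every other edge of `F`
one adjacent edge. This set is a total edge dominating set: edges outside `F` are already
dominated, `e` and `e'` are dominated by `e''` (or by each other when `e''` is one of them),
and every other edge of `F` by its chosen partner. It has at most `|F| + 1 + (|F| - 2)` edges.
-/

open SimpleGraph

variable {V : Type*}

/-- Two edges (as unordered pairs) are adjacent: distinct and sharing an endpoint. -/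
def eAdj (e f : Sym2 V) : Prop := e ≠ f ∧ ∃ v, v ∈ e ∧ v ∈ f

/-- `F` is an edge dominating set of `G`. -/
def IsEDS (G : SimpleGraph V) (F : Set (Sym2 V)) : Prop :=
  F ⊆ G.edgeSet ∧ ∀ e ∈ G.edgeSet, e ∉ F → ∃ f ∈ F, eAdj e f

/-- `F` is a total edge dominating set of `G`. -/
def IsTEDS (G : SimpleGraph V) (F : Set (Sym2 V)) : Prop :=
  F ⊆ G.edgeSet ∧ ∀ e ∈ G.edgeSet, ∃ f ∈ F, eAdj e f

/-- The edge domination number γ'(G). -/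
noncomputable def edsNum (G : SimpleGraph V) : ℕ :=
  sInf {n | ∃ F : Set (Sym2 V), IsEDS G F ∧ F.ncard = n}

/-- The total edge domination number γ'_t(G). -/
noncomputable def tedsNum (G : SimpleGraph V) : ℕ :=
  sInf {n | ∃ F : Set (Sym2 V), IsTEDS G F ∧ F.ncard = n}

/-- A leaf edge: an edge with an endpoint of degree 1. -/
def IsLeafEdge (G : SimpleGraph V) [∀ v : V, Fintype (G.neighborSet v)] (e : Sym2 V) : Prop :=
  e ∈ G.edgeSet ∧ ∃ v ∈ e, G.degree v = 1

theorem eAdj.symm {e f : Sym2 V} (h : eAdj e f) : eAdj f e :=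
  ⟨h.1.symm, h.2.imp fun _ hv => ⟨hv.2, hv.1⟩⟩

theorem eAdj_or_eAdj_of_mem_closedNbhd_inter {e e' e'' : Sym2 V} (hne : e ≠ e')
    (h : e'' = e ∨ eAdj e e'') (h' : e'' = e' ∨ eAdj e' e'') : eAdj e e'' ∨ eAdj e e' := by
  rcases h with rfl | h
  · exact Or.inr (h'.resolve_left hne).symm
  · exact Or.inl h

theorem tedsNum_le_ncard {G : SimpleGraph V} {T : Set (Sym2 V)} (hT : IsTEDS G T) :
    tedsNum G ≤ T.ncard :=
  Nat.sInf_le ⟨T, hT, rfl⟩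

theorem IsEDS.isTEDS_union {G : SimpleGraph V} {F S : Set (Sym2 V)} (hF : IsEDS G F)
    (hS : S ⊆ G.edgeSet) (hFS : ∀ f ∈ F, ∃ g ∈ F ∪ S, eAdj f g) : IsTEDS G (F ∪ S) := by
  refine ⟨Set.union_subset hF.1 hS, fun x hx => ?_⟩
  by_cases hxF : x ∈ F
  · exact hFS x hxF
  · obtain ⟨f, hf, hxf⟩ := hF.2 x hx hxF
    exact ⟨f, Or.inl hf, hxf⟩

theorem Set.ncard_union_insert_image_sdiff_pair_le {α : Type*} {F : Set α} (hF : F.Finite)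
    {a b : α} (ha : a ∈ F) (hb : b ∈ F) (hab : a ≠ b) (c : α) (p : α → α) :
    (F ∪ insert c (p '' (F \ {a, b}))).ncard ≤ 2 * F.ncard - 1 := by
  have hpair : ({a, b} : Set α) ⊆ F := Set.insert_subset ha (Set.singleton_subset_iff.2 hb)
  have htwo : 2 ≤ F.ncard := Set.ncard_pair hab ▸ Set.ncard_le_ncard hpair hF
  have hrest : (F \ {a, b}).ncard = F.ncard - 2 := by
    rw [Set.ncard_sdiff hpair, Set.ncard_pair hab]
  have himage : (p '' (F \ {a, b})).ncard ≤ F.ncard - 2 :=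
    hrest ▸ Set.ncard_image_le hF.sdiff
  have hunion := Set.ncard_union_le F (insert c (p '' (F \ {a, b})))
  have hinsert := Set.ncard_insert_le c (p '' (F \ {a, b}))
  omega

theorem stmt19_general {V : Type*} [Fintype V] (G : SimpleGraph V)
    (F : Set (Sym2 V)) (hF : IsEDS G F) (hFmin : F.ncard = edsNum G)
    (e e' : Sym2 V) (he : e ∈ F) (he' : e' ∈ F) (hne : e ≠ e')
    (e'' : Sym2 V) (he'' : e'' ∈ G.edgeSet)
    (hadj : (e'' = e ∨ eAdj e e'') ∧ (e'' = e' ∨ eAdj e' e''))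
    (hrest : ∀ f ∈ F, f ≠ e → f ≠ e' → ∃ g ∈ G.edgeSet, eAdj f g) :
    tedsNum G ≤ 2 * edsNum G - 1 := by
  choose! partner hpartner using hrest
  set S := insert e'' (partner '' (F \ {e, e'}))
  have hS : S ⊆ G.edgeSet := by
    rintro x (rfl | ⟨f, ⟨hf, hfee'⟩, rfl⟩)
    · exact he''
    · simp only [Set.mem_insert_iff, Set.mem_singleton_iff, not_or] at hfee'
      exact (hpartner f hf hfee'.1 hfee'.2).1
  have hFS : ∀ f ∈ F, ∃ g ∈ F ∪ S, eAdj f g := by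
    intro f hf
    by_cases hfe : f = e
    · subst hfe
      rcases eAdj_or_eAdj_of_mem_closedNbhd_inter hne hadj.1 hadj.2 with h | h
      exacts [⟨e'', Or.inr (Set.mem_insert _ _), h⟩, ⟨e', Or.inl he', h⟩]
    by_cases hfe' : f = e'
    · subst hfe'
      rcases eAdj_or_eAdj_of_mem_closedNbhd_inter (Ne.symm hne) hadj.2 hadj.1 with h | h
      exacts [⟨e'', Or.inr (Set.mem_insert _ _), h⟩, ⟨e, Or.inl he, h⟩]
    exact ⟨partner f, Or.inr (Or.inr ⟨f, ⟨hf, by simp [hfe, hfe']⟩, rfl⟩),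
      (hpartner f hf hfe hfe').2⟩
  calc tedsNum G ≤ (F ∪ S).ncard := tedsNum_le_ncard (hF.isTEDS_union hS hFS)
    _ ≤ 2 * F.ncard - 1 :=
      Set.ncard_union_insert_image_sdiff_pair_le F.toFinite he he' hne e'' partner
    _ = 2 * edsNum G - 1 := by rw [hFmin]

theorem stmt19 {V : Type*} [Fintype V] (G : SimpleGraph V)
    (hTED : ∃ F : Set (Sym2 V), IsTEDS G F)
    (F : Set (Sym2 V)) (hF : IsEDS G F) (hFmin : F.ncard = edsNum G)
    (e e' : Sym2 V) (he : e ∈ F) (he' : e' ∈ F) (hne : e ≠ e')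
    (e'' : Sym2 V) (he'' : e'' ∈ G.edgeSet)
    (hadj : (e'' = e ∨ eAdj e e'') ∧ (e'' = e' ∨ eAdj e' e''))
    (hrest : ∀ f ∈ F, f ≠ e → f ≠ e' → ∃ g ∈ G.edgeSet, eAdj f g) :
    tedsNum G ≤ 2 * edsNum G - 1 :=
  stmt19_general G F hF hFmin e e' he he' hne e'' he'' hadj hrest
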